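/- Suppose Φ satisfies Assumption (A1) and γ² > 4 max_k Φ̂(k), and set δ₀ := ω₀²/γ. For each L ≥ 1 define p_{t,x} := 2γ (∫_{Λ_L*} dk e^{−i2πk·x} Â²_t(k))² and ρ_t := Σ_{y∈Λ_L} p_{t,y}. Then: (i) ∫₀^∞ dt Σ_{x∈Λ_L} p_{t,x} = 1; (ii) ∫₀^∞ dt Σ_{x∈Λ_L} t p_{t,x} = γ^{−1}; and (iii) there exist constants C₁, C₂ > 0 and t₁ ≥ 0, independent of L, such that 0 ≤ ρ_t ≤ C₁ e^{−2δ₀ t} for all t ≥ 0, and ρ_t ≥ C₂ e^{−γ t} for all t ≥ t₁. -/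

import Mathlib

open Real MeasureTheory Matrix
open scoped BigOperators

noncomputable section

/-- Centered representative of an element of the cyclic lattice `Λ_L`. -/
def zrep (L : ℕ) (x : ZMod L) : ℤ :=
  if (x.val : ℤ) ≤ (L : ℤ) / 2 then (x.val : ℤ) else (x.val : ℤ) - (L : ℤ)

/-- Fourier transform of the (symmetric, real) interaction `Φ`. -/
def phiHat (Φ : ℤ → ℝ) (k : ℝ) : ℝ := ∑' x : ℤ, Φ x * Real.cos (2 * π * k * (x : ℝ))

/-- Assumption (A1): exponential decay, symmetry, and pinning with constant `ω₀`. -/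
def AssumptionA1 (Φ : ℤ → ℝ) (ω₀ : ℝ) : Prop :=
  (∃ C > (0:ℝ), ∃ δ > (0:ℝ), ∀ x : ℤ, |Φ x| ≤ C * Real.exp (-δ * |(x : ℝ)|)) ∧
  (∀ x : ℤ, Φ (-x) = Φ x) ∧ 0 < ω₀ ∧ ∀ k : ℝ, ω₀ ^ 2 ≤ phiHat Φ k

/-- `max_k Φ̂(k)`. -/
def supPhiHat (Φ : ℤ → ℝ) : ℝ := ⨆ k : ℝ, phiHat Φ k

def uFun (Φ : ℤ → ℝ) (γ k : ℝ) : ℝ := Real.sqrt ((γ / 2) ^ 2 - phiHat Φ k)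
def muP (Φ : ℤ → ℝ) (γ k : ℝ) : ℝ := γ / 2 + uFun Φ γ k
def muM (Φ : ℤ → ℝ) (γ k : ℝ) : ℝ := γ / 2 - uFun Φ γ k

/-- `Â¹_t(k)`. -/
def Ahat1 (Φ : ℤ → ℝ) (γ t k : ℝ) : ℝ :=
  phiHat Φ k * (Real.exp (-(t * muP Φ γ k)) - Real.exp (-(t * muM Φ γ k))) / (2 * uFun Φ γ k)

/-- `Â²_t(k)`. -/
def Ahat2 (Φ : ℤ → ℝ) (γ t k : ℝ) : ℝ :=
  (muP Φ γ k * Real.exp (-(t * muP Φ γ k)) - muM Φ γ k * Real.exp (-(t * muM Φ γ k)))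
    / (2 * uFun Φ γ k)

/-- Noise domination: `γ² > 4 max_k Φ̂(k)`. -/
def NoiseDom (Φ : ℤ → ℝ) (γ : ℝ) : Prop := 4 * supPhiHat Φ < γ ^ 2

/-- Nondegeneracy of the harmonic forces. -/
def NonDeg (Φ : ℤ → ℝ) (γ : ℝ) : Prop :=
  ∀ ε > (0:ℝ), ∃ Cε > (0:ℝ), ∀ k₀ : ℝ, ε ≤ |k₀| → |k₀| ≤ 1 / 2 →
    Cε ≤ ∫ t in Set.Ioi (0 : ℝ),
        ∫ k in (0:ℝ)..1, (Ahat2 Φ γ t (k + k₀ / 2) - Ahat2 Φ γ t (k - k₀ / 2)) ^ 2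

/-- Assumption (A2). -/
def AssumptionA2 (Φ : ℤ → ℝ) (γ : ℝ) : Prop := NoiseDom Φ γ ∧ NonDeg Φ γ

/-- A dual lattice point `k ∈ Λ_L* ⊂ (-1/2,1/2]`, as a real number. -/
def dualPt (L : ℕ) (κ : ZMod L) : ℝ := (zrep L κ : ℝ) / (L : ℝ)

/-- `A²_{t,x} = ∫_{Λ_L*} dk e^{i2πk·x} Â²_t(k)` (real, by symmetry of `Â²`). -/
def latA2 (Φ : ℤ → ℝ) (γ : ℝ) (L : ℕ) [NeZero L] (t : ℝ) (x : ZMod L) : ℝ :=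
  (L : ℝ)⁻¹ * ∑ κ : ZMod L,
    Real.cos (2 * π * dualPt L κ * (zrep L x : ℝ)) * Ahat2 Φ γ t (dualPt L κ)

/-- The memory kernel `p_{t,x} := 2γ (A²_{t,x})²`. -/
def pKer (Φ : ℤ → ℝ) (γ : ℝ) (L : ℕ) [NeZero L] (t : ℝ) (x : ZMod L) : ℝ :=
  2 * γ * (latA2 Φ γ L t x) ^ 2

/-- The periodized interaction matrix `Φ_L`. -/
def PhiL (Φ : ℤ → ℝ) (L : ℕ) : Matrix (ZMod L) (ZMod L) ℝ :=
  fun x' x => ∑' n : ℤ, Φ (zrep L (x' - x) + n * (L : ℤ))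

/-- `M_γ = [[0, Φ_L],[−1, γ·1]]` in block form. -/
def Mgam (Φ : ℤ → ℝ) (γ : ℝ) (L : ℕ) :
    Matrix (Fin 2 × ZMod L) (Fin 2 × ZMod L) ℝ :=
  fun p q =>
    if p.1 = 0 then (if q.1 = 0 then 0 else PhiL Φ L p.2 q.2)
    else (if q.1 = 0 then -(if p.2 = q.2 then 1 else 0)
          else γ * (if p.2 = q.2 then 1 else 0))

/-- `𝒢_L = diag(Φ_L, 1)`. -/
def GLmat (Φ : ℤ → ℝ) (L : ℕ) :
    Matrix (Fin 2 × ZMod L) (Fin 2 × ZMod L) ℝ :=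
  fun p q =>
    if p.1 = 0 then (if q.1 = 0 then PhiL Φ L p.2 q.2 else 0)
    else (if q.1 = 0 then 0 else (if p.2 = q.2 then 1 else 0))

/-- The translate `Γ_x` of the initial second-moment matrix. -/
def transMat (L : ℕ) (Γ : Matrix (Fin 2 × ZMod L) (Fin 2 × ZMod L) ℝ) (x : ZMod L) :
    Matrix (Fin 2 × ZMod L) (Fin 2 × ZMod L) ℝ :=
  fun p q => Γ (p.1, x + p.2) (q.1, x + q.2)

/-- The source term `g_{t,x} = (e^{−tM_γᵀ} Γ_x e^{−tM_γ})^{22}_{0,0}`. -/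
def gSrc (Φ : ℤ → ℝ) (γ : ℝ) (L : ℕ) [NeZero L]
    (Γ : Matrix (Fin 2 × ZMod L) (Fin 2 × ZMod L) ℝ) (t : ℝ) (x : ZMod L) : ℝ :=
  (NormedSpace.exp ((-t) • (Mgam Φ γ L)ᵀ) * transMat L Γ x *
    NormedSpace.exp ((-t) • Mgam Φ γ L)) (1, 0) (1, 0)

/-- Mean energy density `𝓔 = (2L)⁻¹ Tr(𝒢_L Γ)`. -/
def EDen (Φ : ℤ → ℝ) (L : ℕ) [NeZero L]
    (Γ : Matrix (Fin 2 × ZMod L) (Fin 2 × ZMod L) ℝ) : ℝ :=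
  (2 * (L : ℝ))⁻¹ * Matrix.trace (GLmat Φ L * Γ)

/-- `T` is a continuous solution of the renewal equation (extended by `0` to `t<0`). -/
def IsTempSol (Φ : ℤ → ℝ) (γ : ℝ) (L : ℕ) [NeZero L]
    (Γ : Matrix (Fin 2 × ZMod L) (Fin 2 × ZMod L) ℝ) (T : ℝ → ZMod L → ℝ) : Prop :=
  (∀ x, ContinuousOn (fun t => T t x) (Set.Ici 0)) ∧
  (∀ t < (0:ℝ), ∀ x, T t x = 0) ∧
  ∀ t ≥ (0:ℝ), ∀ x : ZMod L, T t x = gSrc Φ γ L Γ t x +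
    ∫ s in (0:ℝ)..t, ∑ y : ZMod L, pKer Φ γ L s y * T (t - s) (x - y)

/-- `p̃_x := (γ/2)∫₀^∞ p_{s,x} ds`. -/
def ptil (Φ : ℤ → ℝ) (γ : ℝ) (L : ℕ) [NeZero L] (x : ZMod L) : ℝ :=
  γ / 2 * ∫ s in Set.Ioi (0:ℝ), pKer Φ γ L s x

/-- The lattice diffusion operator `D`, as a matrix. -/
def Dmat (Φ : ℤ → ℝ) (γ : ℝ) (L : ℕ) [NeZero L] : Matrix (ZMod L) (ZMod L) ℝ :=
  fun x z => ∑ y : ZMod L, ptil Φ γ L y *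
    ((if z = x then 2 else 0) - (if z = x + y then 1 else 0) - (if z = x - y then 1 else 0))

/-- `κ_L := Σ_y y² p̃_y`. -/
def kappaL (Φ : ℤ → ℝ) (γ : ℝ) (L : ℕ) [NeZero L] : ℝ :=
  ∑ y : ZMod L, (zrep L y : ℝ) ^ 2 * ptil Φ γ L y

/-!
By Parseval on `Λ_L`, `ρ_t = 2γ · L⁻¹ Σ_{k ∈ Λ_L*} Â²_t(k)²`, so every claim reduces to a bound on a
single mode that is uniform in `k`. With `a = μ₊(k)` and `b = μ₋(k)` one has `a + b = γ`,
`ab = Φ̂(k)` and `Â²_t(k) = (a e^{-ta} - b e^{-tb}) / (a - b)`, whose square is a combination of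
three exponentials; its zeroth and first moments are `1/(2(a + b))` and `1/(2(a + b)²)`, which
depend on `k` only through `a + b = γ`. For the pointwise bounds, `b ≥ ω₀²/γ` and
`(a - b)/2 = u(k) ≥ √(γ²/4 - max Φ̂) > 0` uniformly in `k`. Then `|Â²_t(k)| ≤ γ/(2u) · e^{-bt}`, while
`Â²_t(k) = -e^{-γt/2} (b e^{tu} - a e^{-tu}) / (2u)` and the last factor is at least `1` as soon
as `b e^{tu} ≥ 2γ`, which holds for all `t` beyond a threshold independent of `k` and `L`.
-/

open Set
open scoped Nat

theorem integral_pow_mul_exp_neg_mul_Ioi (n : ℕ) {r : ℝ} (hr : 0 < r) :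
    ∫ t in Ioi (0 : ℝ), t ^ n * exp (-(r * t)) = n ! / r ^ (n + 1) := by
  have key := integral_rpow_mul_exp_neg_mul_Ioi (a := n + 1) (by positivity) hr
  simp only [add_sub_cancel_right, rpow_natCast, Gamma_nat_eq_factorial] at key
  rw [key, one_div, inv_rpow hr.le, ← Nat.cast_add_one, rpow_natCast]
  ring

theorem integrableOn_pow_mul_exp_neg_mul_Ioi (n : ℕ) {r : ℝ} (hr : 0 < r) :
    IntegrableOn (fun t => t ^ n * exp (-(r * t))) (Ioi 0) :=
  .of_integral_ne_zero (by rw [integral_pow_mul_exp_neg_mul_Ioi n hr]; positivity)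

def relaxKernel (a b t : ℝ) : ℝ :=
  (a * exp (-(t * a)) - b * exp (-(t * b))) / (a - b)

section RelaxKernel

variable {a b : ℝ}

theorem pow_mul_relaxKernel_sq (n : ℕ) (a b t : ℝ) :
    t ^ n * relaxKernel a b t ^ 2 =
      (a ^ 2 * (t ^ n * exp (-(2 * a * t))) + b ^ 2 * (t ^ n * exp (-(2 * b * t)))
        - 2 * a * b * (t ^ n * exp (-((a + b) * t)))) / (a - b) ^ 2 := by
  have e : ∀ x y : ℝ, exp (-((x + y) * t)) = exp (-(t * x)) * exp (-(t * y)) := fun x y => by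
    rw [← exp_add]; ring_nf
  rw [two_mul a, two_mul b, e, e, e, relaxKernel, div_pow]
  ring

theorem integrableOn_pow_mul_relaxKernel_sq (n : ℕ) (ha : 0 < a) (hb : 0 < b) :
    IntegrableOn (fun t => t ^ n * relaxKernel a b t ^ 2) (Ioi 0) := by
  simp_rw [pow_mul_relaxKernel_sq]
  refine ((((integrableOn_pow_mul_exp_neg_mul_Ioi n ?_).const_mul _).add
    ((integrableOn_pow_mul_exp_neg_mul_Ioi n ?_).const_mul _)).sub
    ((integrableOn_pow_mul_exp_neg_mul_Ioi n ?_).const_mul _)).div_const _ <;> positivity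

theorem integral_pow_mul_relaxKernel_sq (n : ℕ) (ha : 0 < a) (hb : 0 < b) :
    ∫ t in Ioi 0, t ^ n * relaxKernel a b t ^ 2 =
      n ! * (a ^ 2 / (2 * a) ^ (n + 1) + b ^ 2 / (2 * b) ^ (n + 1)
        - 2 * a * b / (a + b) ^ (n + 1)) / (a - b) ^ 2 := by
  have hA := (integrableOn_pow_mul_exp_neg_mul_Ioi n (by positivity : 0 < 2 * a)).const_mul (a ^ 2)
  have hB := (integrableOn_pow_mul_exp_neg_mul_Ioi n (by positivity : 0 < 2 * b)).const_mul (b ^ 2)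
  have hC := (integrableOn_pow_mul_exp_neg_mul_Ioi n (by positivity : 0 < a + b)).const_mul
    (2 * a * b)
  have hAB : IntegrableOn (fun t => a ^ 2 * (t ^ n * exp (-(2 * a * t)))
      + b ^ 2 * (t ^ n * exp (-(2 * b * t)))) (Ioi 0) := hA.add hB
  simp_rw [pow_mul_relaxKernel_sq]
  rw [integral_div, integral_sub hAB hC, integral_add hA hB, integral_const_mul,
    integral_const_mul, integral_const_mul, integral_pow_mul_exp_neg_mul_Ioi n (by positivity),
    integral_pow_mul_exp_neg_mul_Ioi n (by positivity),
    integral_pow_mul_exp_neg_mul_Ioi n (by positivity)]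
  ring

theorem integral_relaxKernel_sq (ha : 0 < a) (hb : 0 < b) (hab : b ≠ a) :
    ∫ t in Ioi 0, relaxKernel a b t ^ 2 = 1 / (2 * (a + b)) := by
  have h := integral_pow_mul_relaxKernel_sq 0 ha hb
  simp only [pow_zero, one_mul] at h
  rw [h]
  have : a - b ≠ 0 := sub_ne_zero.mpr hab.symm
  field_simp
  ring

theorem integral_mul_relaxKernel_sq (ha : 0 < a) (hb : 0 < b) (hab : b ≠ a) :
    ∫ t in Ioi 0, t * relaxKernel a b t ^ 2 = 1 / (2 * (a + b) ^ 2) := by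
  have h := integral_pow_mul_relaxKernel_sq 1 ha hb
  simp only [pow_one] at h
  rw [h]
  have : a - b ≠ 0 := sub_ne_zero.mpr hab.symm
  field_simp
  ring

theorem abs_relaxKernel_le (hb : 0 < b) (hba : b < a) {t : ℝ} (ht : 0 ≤ t) :
    |relaxKernel a b t| ≤ (a + b) / (a - b) * exp (-(b * t)) := by
  have hexp : exp (-(t * a)) ≤ exp (-(b * t)) := exp_le_exp.mpr (by nlinarith)
  rw [relaxKernel, abs_div, abs_of_pos (sub_pos.mpr hba), div_mul_eq_mul_div]
  gcongr
  calc |a * exp (-(t * a)) - b * exp (-(t * b))|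
      ≤ a * exp (-(t * a)) + b * exp (-(t * b)) := by
        rw [abs_le]; constructor <;> nlinarith [exp_pos (-(t * a)), exp_pos (-(t * b))]
    _ ≤ (a + b) * exp (-(b * t)) := by rw [mul_comm t b]; nlinarith [exp_pos (-(b * t))]

theorem exp_le_relaxKernel_sq (hb : 0 < b) (hba : b < a) {t : ℝ}
    (hgrow : 2 * a ≤ b * exp ((a - b) / 2 * t)) :
    exp (-((a + b) * t)) ≤ relaxKernel a b t ^ 2 := by
  set s := (a - b) / 2 * t
  have hs : 1 ≤ exp s := by
    by_contra! h
    nlinarith [exp_pos s]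
  have hs' : exp (-s) ≤ 1 := by rw [exp_neg]; exact inv_le_one_of_one_le₀ hs
  set D := (b * exp s - a * exp (-s)) / (a - b)
  have hD : 1 ≤ D := by
    rw [le_div_iff₀ (sub_pos.mpr hba)]
    nlinarith [exp_pos (-s)]
  have hK : relaxKernel a b t ^ 2 = exp (-((a + b) * t)) * D ^ 2 := by
    have ea : exp (-(t * a)) = exp (-((a + b) / 2 * t)) * exp (-s) := by
      rw [← exp_add]; simp only [s]; ring_nf
    have eb : exp (-(t * b)) = exp (-((a + b) / 2 * t)) * exp s := by
      rw [← exp_add]; simp only [s]; ring_nf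
    have e2 : exp (-((a + b) * t)) = exp (-((a + b) / 2 * t)) ^ 2 := by
      rw [← exp_nat_mul]; ring_nf
    rw [relaxKernel, ea, eb, e2]
    ring
  rw [hK]
  exact le_mul_of_one_le_right (exp_pos _).le (by nlinarith)

end RelaxKernel

def cosTransform (L : ℕ) [NeZero L] (f : ZMod L → ℝ) (x : ZMod L) : ℝ :=
  (L : ℝ)⁻¹ * ∑ κ, cos (2 * π * dualPt L κ * zrep L x) * f κ

section LatticeFourier

variable {L : ℕ} [NeZero L]

theorem intCast_zrep (x : ZMod L) : ((zrep L x : ℤ) : ZMod L) = x := by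
  unfold zrep
  split_ifs <;> simp

theorem sum_cos_int_mul_zrep (m : ℤ) :
    ∑ x : ZMod L, cos (2 * π * m * zrep L x / L) = if (m : ZMod L) = 0 then (L : ℝ) else 0 := by
  have hre : ∀ x : ZMod L,
      cos (2 * π * m * zrep L x / L) = (ZMod.stdAddChar (x * (m : ZMod L))).re := by
    intro x
    rw [← intCast_zrep x, ← Int.cast_mul, ZMod.stdAddChar_coe, intCast_zrep,
      show 2 * π * Complex.I * ((zrep L x * m : ℤ) : ℂ) / L
        = ((2 * π * m * zrep L x / L : ℝ) : ℂ) * Complex.I by push_cast; ring,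
      Complex.exp_ofReal_mul_I_re]
  simp_rw [hre, ← Complex.re_sum, AddChar.sum_mulShift _ (ZMod.isPrimitive_stdAddChar L),
    ZMod.card]
  split_ifs <;> simp

theorem sum_two_mul_cos_mul_cos (κ l : ZMod L) :
    ∑ x : ZMod L, 2 * cos (2 * π * dualPt L κ * zrep L x) * cos (2 * π * dualPt L l * zrep L x) =
      (if l = κ then (L : ℝ) else 0) + (if l = -κ then (L : ℝ) else 0) := by
  have hx : ∀ x : ZMod L,
      2 * cos (2 * π * dualPt L κ * zrep L x) * cos (2 * π * dualPt L l * zrep L x) =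
        cos (2 * π * ((zrep L κ - zrep L l : ℤ) : ℝ) * zrep L x / L)
          + cos (2 * π * ((zrep L κ + zrep L l : ℤ) : ℝ) * zrep L x / L) := fun x => by
    rw [two_mul_cos_mul_cos]; unfold dualPt; push_cast; ring_nf
  simp_rw [hx, Finset.sum_add_distrib, sum_cos_int_mul_zrep]
  push_cast [intCast_zrep]
  simp only [sub_eq_zero, eq_comm (a := κ), add_eq_zero_iff_eq_neg']

theorem sum_cosTransform_sq {f : ZMod L → ℝ} (hf : ∀ κ, f (-κ) = f κ) :
    ∑ x : ZMod L, cosTransform L f x ^ 2 = 𝔼 κ, f κ ^ 2 := by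
  have hL : (L : ℝ) ≠ 0 := NeZero.ne _
  calc ∑ x : ZMod L, cosTransform L f x ^ 2
      = (2 * L ^ 2 : ℝ)⁻¹ * ∑ κ, ∑ l, f κ * f l *
          ∑ x : ZMod L, 2 * cos (2 * π * dualPt L κ * zrep L x) *
            cos (2 * π * dualPt L l * zrep L x) := by
        simp_rw [cosTransform, mul_pow, sq, Finset.sum_mul_sum, Finset.mul_sum]
        rw [Finset.sum_comm]
        refine Finset.sum_congr rfl fun κ _ => ?_
        rw [Finset.sum_comm]
        refine Finset.sum_congr rfl fun l _ => Finset.sum_congr rfl fun x _ => ?_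
        field_simp
    _ = (2 * L ^ 2 : ℝ)⁻¹ * ∑ κ, L * (f κ * f κ + f κ * f (-κ)) := by
        simp only [sum_two_mul_cos_mul_cos, mul_add, mul_ite, mul_zero, Finset.sum_add_distrib,
          Finset.sum_ite_eq', Finset.mem_univ, if_true]
        ring_nf
    _ = 𝔼 κ, f κ ^ 2 := by
        simp_rw [hf, ← two_mul, ← sq, ← Finset.mul_sum, Fintype.expect_eq_sum_div_card, ZMod.card]
        field_simp

end LatticeFourier

section Symbol

variable {Φ : ℤ → ℝ}

theorem summable_abs_of_abs_le_exp {C δ : ℝ} (hδ : 0 < δ)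
    (h : ∀ x : ℤ, |Φ x| ≤ C * exp (-δ * |(x : ℝ)|)) : Summable fun x => |Φ x| := by
  have hgeom : Summable fun n : ℕ => C * exp (n * -δ) :=
    (summable_exp_nat_mul_iff.mpr (neg_lt_zero.mpr hδ)).mul_left C
  refine Summable.of_nonneg_of_le (fun x => abs_nonneg _) h (.of_nat_of_neg ?_ ?_) <;>
    simpa [mul_comm] using hgeom

theorem abs_phiHat_le (hΦ : Summable fun x => |Φ x|) (k : ℝ) :
    |phiHat Φ k| ≤ ∑' x, |Φ x| :=
  tsum_of_norm_bounded (f := fun x => Φ x * cos (2 * π * k * x)) hΦ.hasSum fun x => by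
    simpa [abs_mul] using mul_le_of_le_one_right (abs_nonneg (Φ x)) (abs_cos_le_one _)

theorem phiHat_le_supPhiHat (hΦ : Summable fun x => |Φ x|) (k : ℝ) :
    phiHat Φ k ≤ supPhiHat Φ :=
  le_ciSup ⟨_, by rintro _ ⟨k, rfl⟩; exact (le_abs_self _).trans (abs_phiHat_le hΦ k)⟩ k

theorem phiHat_int_sub (n : ℤ) (k : ℝ) : phiHat Φ (n - k) = phiHat Φ k := by
  refine tsum_congr fun x => ?_
  rw [show 2 * π * (n - k) * x = -(2 * π * k * x) + (n * x : ℤ) * (2 * π) by push_cast; ring,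
    cos_add_int_mul_two_pi, cos_neg]

theorem exists_dualPt_neg (L : ℕ) [NeZero L] (κ : ZMod L) :
    ∃ n : ℤ, dualPt L (-κ) = n - dualPt L κ := by
  obtain ⟨n, hn⟩ := (ZMod.intCast_zmod_eq_zero_iff_dvd (zrep L (-κ) + zrep L κ) L).mp
    (by push_cast [intCast_zrep]; ring)
  refine ⟨n, ?_⟩
  have hL : (L : ℝ) ≠ 0 := NeZero.ne _
  rw [dualPt, dualPt, eq_sub_iff_add_eq, ← add_div, div_eq_iff hL]
  exact_mod_cast hn.trans (mul_comm _ _)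

end Symbol

section Mode

variable {Φ : ℤ → ℝ} {γ k : ℝ}

theorem muP_add_muM : muP Φ γ k + muM Φ γ k = γ := by
  unfold muP muM; ring

theorem Ahat2_eq_relaxKernel (t : ℝ) :
    Ahat2 Φ γ t k = relaxKernel (muP Φ γ k) (muM Φ γ k) t := by
  rw [Ahat2, relaxKernel, muP, muM]; ring_nf

theorem Ahat2_dualPt_neg (L : ℕ) [NeZero L] (t : ℝ) (κ : ZMod L) :
    Ahat2 Φ γ t (dualPt L (-κ)) = Ahat2 Φ γ t (dualPt L κ) := by
  obtain ⟨n, hn⟩ := exists_dualPt_neg L κ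
  simp only [Ahat2, muP, muM, uFun, hn, phiHat_int_sub]

theorem muP_mul_muM (h : 4 * phiHat Φ k ≤ γ ^ 2) : muP Φ γ k * muM Φ γ k = phiHat Φ k := by
  have hu : uFun Φ γ k ^ 2 = (γ / 2) ^ 2 - phiHat Φ k := sq_sqrt (by linarith)
  rw [muP, muM]; nlinarith

theorem muP_le (hγ : 0 ≤ γ) (h0 : 0 ≤ phiHat Φ k) : muP Φ γ k ≤ γ := by
  have : uFun Φ γ k ≤ γ / 2 :=
    (sqrt_le_sqrt (by linarith)).trans_eq (sqrt_sq (by linarith))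
  rw [muP]; linarith

theorem muM_pos (hγ : 0 < γ) (h0 : 0 < phiHat Φ k) (h1 : 4 * phiHat Φ k ≤ γ ^ 2) :
    0 < muM Φ γ k := by
  have hP : 0 < muP Φ γ k := by
    rw [muP, uFun]; linarith [sqrt_nonneg ((γ / 2) ^ 2 - phiHat Φ k)]
  exact pos_of_mul_pos_right (muP_mul_muM h1 ▸ h0) hP.le

theorem div_le_muM (hγ : 0 < γ) (h0 : 0 < phiHat Φ k) (h1 : 4 * phiHat Φ k ≤ γ ^ 2) {c : ℝ}
    (hc : c ≤ phiHat Φ k) : c / γ ≤ muM Φ γ k := by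
  rw [div_le_iff₀ hγ]
  nlinarith [muP_mul_muM h1, muP_le hγ.le h0.le, muM_pos hγ h0 h1]

theorem muM_lt_muP (h : 4 * phiHat Φ k < γ ^ 2) : muM Φ γ k < muP Φ γ k := by
  have : 0 < uFun Φ γ k := sqrt_pos.mpr (by linarith)
  rw [muP, muM]; linarith

theorem integrableOn_Ahat2_sq (hγ : 0 < γ) (h0 : 0 < phiHat Φ k)
    (h1 : 4 * phiHat Φ k < γ ^ 2) : IntegrableOn (fun t => Ahat2 Φ γ t k ^ 2) (Ioi 0) := by
  have hb := muM_pos hγ h0 h1.le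
  simpa [Ahat2_eq_relaxKernel] using
    integrableOn_pow_mul_relaxKernel_sq 0 (hb.trans (muM_lt_muP h1)) hb

theorem integrableOn_mul_Ahat2_sq (hγ : 0 < γ) (h0 : 0 < phiHat Φ k)
    (h1 : 4 * phiHat Φ k < γ ^ 2) : IntegrableOn (fun t => t * Ahat2 Φ γ t k ^ 2) (Ioi 0) := by
  have hb := muM_pos hγ h0 h1.le
  simpa [Ahat2_eq_relaxKernel] using
    integrableOn_pow_mul_relaxKernel_sq 1 (hb.trans (muM_lt_muP h1)) hb

theorem integral_Ahat2_sq (hγ : 0 < γ) (h0 : 0 < phiHat Φ k) (h1 : 4 * phiHat Φ k < γ ^ 2) :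
    ∫ t in Ioi 0, Ahat2 Φ γ t k ^ 2 = 1 / (2 * γ) := by
  have hb := muM_pos hγ h0 h1.le
  simp_rw [Ahat2_eq_relaxKernel]
  rw [integral_relaxKernel_sq (hb.trans (muM_lt_muP h1)) hb (muM_lt_muP h1).ne, muP_add_muM]

theorem integral_mul_Ahat2_sq (hγ : 0 < γ) (h0 : 0 < phiHat Φ k)
    (h1 : 4 * phiHat Φ k < γ ^ 2) :
    ∫ t in Ioi 0, t * Ahat2 Φ γ t k ^ 2 = 1 / (2 * γ ^ 2) := by
  have hb := muM_pos hγ h0 h1.le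
  simp_rw [Ahat2_eq_relaxKernel]
  rw [integral_mul_relaxKernel_sq (hb.trans (muM_lt_muP h1)) hb (muM_lt_muP h1).ne, muP_add_muM]

theorem Ahat2_sq_le (hγ : 0 < γ) (h0 : 0 < phiHat Φ k) (h1 : 4 * phiHat Φ k < γ ^ 2)
    {u₀ δ t : ℝ} (hu₀ : 0 < u₀) (hu : u₀ ≤ uFun Φ γ k) (hδ : δ ≤ muM Φ γ k) (ht : 0 ≤ t) :
    Ahat2 Φ γ t k ^ 2 ≤ (γ / (2 * u₀)) ^ 2 * exp (-2 * δ * t) := by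
  have hb := muM_pos hγ h0 h1.le
  have hK := abs_relaxKernel_le hb (muM_lt_muP h1) ht
  rw [muP_add_muM, show muP Φ γ k - muM Φ γ k = 2 * uFun Φ γ k by rw [muP, muM]; ring,
    ← Ahat2_eq_relaxKernel] at hK
  have hbound : |Ahat2 Φ γ t k| ≤ γ / (2 * u₀) * exp (-(δ * t)) :=
    hK.trans (by gcongr)
  calc Ahat2 Φ γ t k ^ 2 = |Ahat2 Φ γ t k| ^ 2 := (sq_abs _).symm
    _ ≤ (γ / (2 * u₀) * exp (-(δ * t))) ^ 2 := by gcongr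
    _ = (γ / (2 * u₀)) ^ 2 * exp (-2 * δ * t) := by rw [mul_pow, ← exp_nat_mul]; ring_nf

theorem exp_neg_le_Ahat2_sq (hγ : 0 < γ) (h0 : 0 < phiHat Φ k) (h1 : 4 * phiHat Φ k < γ ^ 2)
    {u₀ δ t : ℝ} (hu : u₀ ≤ uFun Φ γ k) (hδ : δ ≤ muM Φ γ k) (ht : 0 ≤ t)
    (hgrow : 2 * γ ≤ δ * exp (u₀ * t)) :
    exp (-γ * t) ≤ Ahat2 Φ γ t k ^ 2 := by
  have hb := muM_pos hγ h0 h1.le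
  have hab : (muP Φ γ k - muM Φ γ k) / 2 = uFun Φ γ k := by rw [muP, muM]; ring
  have hgrow' : 2 * muP Φ γ k ≤ muM Φ γ k * exp ((muP Φ γ k - muM Φ γ k) / 2 * t) :=
    calc 2 * muP Φ γ k ≤ 2 * γ := by linarith [muP_le hγ.le h0.le]
      _ ≤ δ * exp (u₀ * t) := hgrow
      _ ≤ muM Φ γ k * exp (u₀ * t) := by gcongr
      _ ≤ muM Φ γ k * exp ((muP Φ γ k - muM Φ γ k) / 2 * t) := by rw [hab]; gcongr
  have hK := exp_le_relaxKernel_sq hb (muM_lt_muP h1) hgrow'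
  rwa [muP_add_muM, ← neg_mul, ← Ahat2_eq_relaxKernel] at hK

end Mode

section Lattice

variable {Φ : ℤ → ℝ} {γ : ℝ} {L : ℕ} [NeZero L]

theorem sum_pKer_eq_expect (t : ℝ) :
    ∑ x : ZMod L, pKer Φ γ L t x = 2 * γ * 𝔼 κ, Ahat2 Φ γ t (dualPt L κ) ^ 2 := by
  rw [← sum_cosTransform_sq (Ahat2_dualPt_neg L t), Finset.mul_sum]
  rfl

theorem integral_expect {ι α : Type*} [Fintype ι] [MeasurableSpace α] {μ : Measure α}
    {f : ι → α → ℝ} (hf : ∀ i, Integrable (f i) μ) :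
    ∫ a, 𝔼 i, f i a ∂μ = 𝔼 i, ∫ a, f i a ∂μ := by
  simp_rw [Fintype.expect_eq_sum_div_card]
  rw [integral_div, integral_finsetSum _ fun i _ => hf i]

theorem integral_mul_sum_pKer {g : ℝ → ℝ} {c : ℝ}
    (hint : ∀ k, IntegrableOn (fun t => g t * Ahat2 Φ γ t k ^ 2) (Ioi 0))
    (hval : ∀ k, ∫ t in Ioi 0, g t * Ahat2 Φ γ t k ^ 2 = c) :
    ∫ t in Ioi 0, g t * ∑ x : ZMod L, pKer Φ γ L t x = 2 * γ * c := by
  simp_rw [sum_pKer_eq_expect, mul_left_comm (g _), Finset.mul_expect _ _ (g _)]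
  rw [integral_const_mul, integral_expect fun κ => hint _]
  simp [hval]

theorem sum_pKer_le {t B : ℝ} (hγ : 0 ≤ γ) (h : ∀ k, Ahat2 Φ γ t k ^ 2 ≤ B) :
    ∑ x : ZMod L, pKer Φ γ L t x ≤ 2 * γ * B := by
  rw [sum_pKer_eq_expect]
  gcongr
  exact Finset.expect_le Finset.univ_nonempty fun κ _ => h _

theorem le_sum_pKer {t B : ℝ} (hγ : 0 ≤ γ) (h : ∀ k, B ≤ Ahat2 Φ γ t k ^ 2) :
    2 * γ * B ≤ ∑ x : ZMod L, pKer Φ γ L t x := by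
  rw [sum_pKer_eq_expect]
  gcongr
  exact Finset.le_expect Finset.univ_nonempty fun κ _ => h _

theorem integral_sum_pKer (hγ : 0 < γ) (h0 : ∀ k, 0 < phiHat Φ k)
    (h1 : ∀ k, 4 * phiHat Φ k < γ ^ 2) :
    ∫ t in Ioi 0, ∑ x : ZMod L, pKer Φ γ L t x = 1 := by
  have h := integral_mul_sum_pKer (L := L) (g := fun _ => 1)
    (fun k => by simpa using integrableOn_Ahat2_sq hγ (h0 k) (h1 k))
    (fun k => by simpa using integral_Ahat2_sq hγ (h0 k) (h1 k))
  simp only [one_mul] at h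
  rw [h]
  field_simp

theorem integral_sum_mul_pKer (hγ : 0 < γ) (h0 : ∀ k, 0 < phiHat Φ k)
    (h1 : ∀ k, 4 * phiHat Φ k < γ ^ 2) :
    ∫ t in Ioi 0, ∑ x : ZMod L, t * pKer Φ γ L t x = γ⁻¹ := by
  simp_rw [← Finset.mul_sum]
  rw [integral_mul_sum_pKer (fun k => integrableOn_mul_Ahat2_sq hγ (h0 k) (h1 k))
    (fun k => integral_mul_Ahat2_sq hγ (h0 k) (h1 k))]
  field_simp

end Lattice

theorem le_mul_exp_mul {c u M t : ℝ} (hc : 0 < c) (hu : 0 < u) (ht : M / (c * u) ≤ t) :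
    M ≤ c * exp (u * t) :=
  calc M = c * (u * (M / (c * u))) := by field_simp
    _ ≤ c * (u * t) := by gcongr
    _ ≤ c * exp (u * t) := by gcongr; linarith [add_one_le_exp (u * t)]

/-- normalization, first moment and uniform bounds for `ρ_t = Σ_x p_{t,x}`
(Corollary 4.5, items 4–6). -/
theorem stmt7 (Φ : ℤ → ℝ) (ω₀ γ : ℝ) (hA1 : AssumptionA1 Φ ω₀) (hγ : 0 < γ)
    (hdom : 4 * supPhiHat Φ < γ ^ 2) :
    ∃ C₁ > (0:ℝ), ∃ C₂ > (0:ℝ), ∃ t₁ ≥ (0:ℝ), ∀ (L : ℕ) [NeZero L], 1 ≤ L →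
      (∫ t in Set.Ioi (0:ℝ), ∑ x : ZMod L, pKer Φ γ L t x) = 1 ∧
      (∫ t in Set.Ioi (0:ℝ), ∑ x : ZMod L, t * pKer Φ γ L t x) = γ⁻¹ ∧
      (∀ t ≥ (0:ℝ), 0 ≤ ∑ x : ZMod L, pKer Φ γ L t x ∧
        ∑ x : ZMod L, pKer Φ γ L t x ≤ C₁ * Real.exp (-2 * (ω₀ ^ 2 / γ) * t)) ∧
      (∀ t ≥ t₁, C₂ * Real.exp (-γ * t) ≤ ∑ x : ZMod L, pKer Φ γ L t x) := by
  obtain ⟨⟨C, -, δ, hδ, hdecay⟩, -, hω, hpin⟩ := hA1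
  have h0 : ∀ k, 0 < phiHat Φ k := fun k => (pow_pos hω 2).trans_le (hpin k)
  have hsup : ∀ k, phiHat Φ k ≤ supPhiHat Φ :=
    phiHat_le_supPhiHat (summable_abs_of_abs_le_exp hδ hdecay)
  have h1 : ∀ k, 4 * phiHat Φ k < γ ^ 2 := fun k => by linarith [hsup k]
  set u₀ := √((γ / 2) ^ 2 - supPhiHat Φ)
  set δ₀ := ω₀ ^ 2 / γ
  have hu₀ : 0 < u₀ := sqrt_pos.mpr (by linarith)
  have hδ₀ : 0 < δ₀ := by positivity
  have hu : ∀ k, u₀ ≤ uFun Φ γ k := fun k => sqrt_le_sqrt (by linarith [hsup k])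
  have hmuM : ∀ k, δ₀ ≤ muM Φ γ k := fun k => div_le_muM hγ (h0 k) (h1 k).le (hpin k)
  refine ⟨2 * γ * (γ / (2 * u₀)) ^ 2, by positivity, 2 * γ, by positivity,
    2 * γ / (δ₀ * u₀), by positivity, fun L _ _ => ⟨integral_sum_pKer hγ h0 h1,
      integral_sum_mul_pKer hγ h0 h1, fun t ht => ⟨?_, ?_⟩, fun t ht => ?_⟩⟩
  · exact Finset.sum_nonneg fun x _ => by unfold pKer; positivity
  · exact (sum_pKer_le hγ.le fun k => Ahat2_sq_le hγ (h0 k) (h1 k) hu₀ (hu k) (hmuM k) ht).trans_eq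
      (mul_assoc _ _ _).symm
  · have ht₀ : 0 ≤ t := le_trans (by positivity) ht
    exact le_sum_pKer hγ.le fun k => exp_neg_le_Ahat2_sq hγ (h0 k) (h1 k) (hu k) (hmuM k) ht₀
      (le_mul_exp_mul hδ₀ hu₀ ht)
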